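/- Let F be a graph on r vertices, let H_1 and H_2 be connected F-graphs, let h be an F-edge belonging to both H_1 and H_2, and let v be a vertex of h such that each of the remaining r−1 vertices of h is incident to no F-edge other than h belonging to both H_1 and H_2. Let H_2' be the F-graph obtained from H_2 by replacing these r−1 vertices with entirely new vertices not occurring in H_1 or H_2. Then n(H_1 ∪ H_2') = n(H_1 ∪ H_2). -/
import Mathlib


open scoped Classical
open Filter Asymptotics

noncomputable section

/-! ### Basic graph quantities -/

/-- The number of edges of a simple graph. -/
def edgeCnt {V : Type*} (G : SimpleGraph V) : ℕ := G.edgeSet.ncard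

/-- The 1-density `e(F)/(v(F)-1)` of a graph `F` on `r` vertices. -/
def d1 {r : ℕ} (F : SimpleGraph (Fin r)) : ℝ := (edgeCnt F : ℝ) / ((r : ℝ) - 1)

/-- `F` is strictly 1-balanced: every proper subgraph `S` with at least 2 vertices and at
least one edge satisfies `d₁(S) < d₁(F)`. -/
def Strictly1Balanced {r : ℕ} (F : SimpleGraph (Fin r)) : Prop :=
  ∀ S : F.Subgraph, S ≠ ⊤ → 2 ≤ S.verts.ncard → 1 ≤ S.edgeSet.ncard →
    (S.edgeSet.ncard : ℝ) / ((S.verts.ncard : ℝ) - 1) < d1 F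

/-- The number of automorphisms of `F`. -/
def autCard {r : ℕ} (F : SimpleGraph (Fin r)) : ℕ := Nat.card (F ≃g F)

/-! ### Copies of `F` in a graph, `F`-factors, `F`-isolated vertices -/

/-- `φ` is a copy of `F` in `G` (an embedding of `F` as a not necessarily induced subgraph). -/
def IsCopyIn {r n : ℕ} (F : SimpleGraph (Fin r)) (G : SimpleGraph (Fin n))
    (φ : Fin r ↪ Fin n) : Prop :=
  ∀ u v, F.Adj u v → G.Adj (φ u) (φ v)

/-- `G` contains an `F`-factor: pairwise vertex-disjoint copies of `F` covering all vertices. -/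
def HasFFactor {r n : ℕ} (F : SimpleGraph (Fin r)) (G : SimpleGraph (Fin n)) : Prop :=
  ∃ Φ : Finset (Fin r ↪ Fin n),
    (∀ φ ∈ Φ, IsCopyIn F G φ) ∧
    (∀ φ ∈ Φ, ∀ ψ ∈ Φ, φ ≠ ψ → ∀ x : Fin n, ¬(x ∈ Set.range φ ∧ x ∈ Set.range ψ)) ∧
    (∀ x : Fin n, ∃ φ ∈ Φ, x ∈ Set.range φ)

/-- Vertex `x` is `F`-isolated in `G`: no copy of `F` in `G` contains `x`. -/
def FIsolated {r n : ℕ} (F : SimpleGraph (Fin r)) (G : SimpleGraph (Fin n)) (x : Fin n) : Prop :=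
  ∀ φ : Fin r ↪ Fin n, IsCopyIn F G φ → x ∉ Set.range φ

/-! ### The random graph `G(n,p)` -/

/-- Probability of the event `P` in the Erdős–Rényi random graph `G(n,p)`. -/
def gnpProb (n : ℕ) (p : ℝ) (P : SimpleGraph (Fin n) → Prop) : ℝ :=
  ∑ G : SimpleGraph (Fin n),
    if P G then p ^ edgeCnt G * (1 - p) ^ (n.choose 2 - edgeCnt G) else 0

/-- The sharp threshold `p* = ((aut F / r!) · ln n / C(n-1, r-1))^(1/e(F))`. -/
def pstar {r : ℕ} (F : SimpleGraph (Fin r)) (n : ℕ) : ℝ :=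
  ((autCard F : ℝ) / (r.factorial : ℝ) * Real.log n / ((n - 1).choose (r - 1) : ℝ)) ^
    ((1 : ℝ) / (edgeCnt F : ℝ))

/-! ### `F`-edges and `F`-graphs -/

/-- An `F`-edge: a pair (vertex set, edge set); the copies of `F` among these are singled out
by `FEdge.IsCopyOf`. -/
abbrev FEdge (V : Type*) := Finset V × Finset (Sym2 V)

/-- `h` is a copy of `F` with vertices in `V`. -/
def FEdge.IsCopyOf {r : ℕ} {V : Type*} (h : FEdge V) (F : SimpleGraph (Fin r)) : Prop :=
  ∃ φ : Fin r → V, Function.Injective φ ∧ (↑h.1 : Set V) = Set.range φ ∧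
    (↑h.2 : Set (Sym2 V)) = Sym2.map φ '' F.edgeSet

/-- An `F`-graph: a vertex set together with a set of `F`-edges. -/
abbrev FGraph (V : Type*) := Finset V × Finset (FEdge V)

/-- Well-formedness of an `F`-graph w.r.t. `F`: every `F`-edge is a copy of `F` with
vertices inside the vertex set. -/
def FGraph.Wf {r : ℕ} {V : Type*} (H : FGraph V) (F : SimpleGraph (Fin r)) : Prop :=
  ∀ h ∈ H.2, FEdge.IsCopyOf h F ∧ h.1 ⊆ H.1

/-- The edge set of the shadow graph of an `F`-graph. -/
def shadowEdges {V : Type*} [DecidableEq V] (H : FGraph V) : Finset (Sym2 V) :=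
  H.2.sup Prod.snd

/-- The shadow graph of an `F`-graph. -/
def shadow {V : Type*} [DecidableEq V] (H : FGraph V) : SimpleGraph V :=
  SimpleGraph.fromEdgeSet ↑(shadowEdges H)

/-- Number of connected components of the shadow graph of `H` (on the vertex set of `H`). -/
def compCount {V : Type*} [DecidableEq V] (H : FGraph V) : ℕ :=
  Nat.card ((shadow H).induce (↑H.1 : Set V)).ConnectedComponent

/-- An `F`-graph is connected if its shadow graph is. -/
def FGraphConnected {V : Type*} [DecidableEq V] (H : FGraph V) : Prop :=
  ((shadow H).induce (↑H.1 : Set V)).Connected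

/-- The nullity `n(H) = (r-1)e(H) + c(H) - v(H)` of an `F`-graph. -/
def nullity (r : ℕ) {V : Type*} [DecidableEq V] (H : FGraph V) : ℤ :=
  ((r : ℤ) - 1) * H.2.card + compCount H - H.1.card

/-- An avoidable configuration: a connected `F`-graph of nullity at least 2. -/
def Avoidable {r : ℕ} {V : Type*} [DecidableEq V] (F : SimpleGraph (Fin r))
    (H : FGraph V) : Prop :=
  FGraph.Wf H F ∧ FGraphConnected H ∧ 2 ≤ nullity r H

/-- The `F`-edge `h` is induced by the `F`-graph `H`: it is a copy of `F`, not an `F`-edge of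
`H`, but all its edges lie in the shadow graph of `H`. -/
def InducedBy {r : ℕ} {V : Type*} [DecidableEq V] (F : SimpleGraph (Fin r)) (h : FEdge V)
    (H : FGraph V) : Prop :=
  FEdge.IsCopyOf h F ∧ h ∉ H.2 ∧ h.2 ⊆ shadowEdges H

/-- `C` is a clean `F`-cycle of length `k`. -/
def IsCleanCycleOfLen {r : ℕ} {V : Type*} [DecidableEq V] (F : SimpleGraph (Fin r))
    (C : FGraph V) (k : ℕ) : Prop :=
  FGraph.Wf C F ∧ C.1 = C.2.sup Prod.fst ∧
  ((k = 2 ∧ ∃ h₁ h₂ : FEdge V, h₁ ≠ h₂ ∧ C.2 = {h₁, h₂} ∧ (h₁.1 ∩ h₂.1).card = 2) ∨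
   (3 ≤ k ∧ ∃ h : Fin k → FEdge V, Function.Injective h ∧ C.2 = Finset.image h Finset.univ ∧
     ∃ v : Fin k → V, Function.Injective v ∧
       (∀ i j : Fin k, ((i : ℕ) + 1) % k = (j : ℕ) → (h i).1 ∩ (h j).1 = {v i}) ∧
       (∀ i j : Fin k, i ≠ j → ((i : ℕ) + 1) % k ≠ (j : ℕ) → ((j : ℕ) + 1) % k ≠ (i : ℕ) →
         (h i).1 ∩ (h j).1 = ∅)))

/-- `C` is a clean `F`-cycle (of some length `k ≥ 2`). -/
def IsCleanCycle {r : ℕ} {V : Type*} [DecidableEq V] (F : SimpleGraph (Fin r))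
    (C : FGraph V) : Prop :=
  ∃ k, IsCleanCycleOfLen F C k

/-- `C` is a sparse clean `F`-cycle: a clean `F`-cycle of length 2 whose two overlap vertices
form an edge of both of its `F`-edges. -/
def IsSparse {r : ℕ} {V : Type*} [DecidableEq V] (F : SimpleGraph (Fin r))
    (C : FGraph V) : Prop :=
  IsCleanCycleOfLen F C 2 ∧ ∃ h₁ h₂ : FEdge V, h₁ ≠ h₂ ∧ C.2 = {h₁, h₂} ∧
    ∃ x y : V, x ≠ y ∧ h₁.1 ∩ h₂.1 = {x, y} ∧ s(x, y) ∈ h₁.2 ∧ s(x, y) ∈ h₂.2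

/-! ### The random `F`-graph `H_F(n,π)` -/

/-- All potential `F`-edges on the vertex set `Fin n`. -/
def allFEdges (r n : ℕ) (F : SimpleGraph (Fin r)) : Finset (FEdge (Fin n)) :=
  Finset.univ.filter fun h => FEdge.IsCopyOf h F

/-- Expectation of `X` under the random `F`-graph `H_F(n,π)`, whose `F`-edge set is a random
subset of `allFEdges r n F`, each `F`-edge present independently with probability `π`. -/
def hfExp (r n : ℕ) (F : SimpleGraph (Fin r)) (π : ℝ)
    (X : Finset (FEdge (Fin n)) → ℝ) : ℝ :=
  ∑ S ∈ (allFEdges r n F).powerset,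
    π ^ S.card * (1 - π) ^ ((allFEdges r n F).card - S.card) * X S

/-- Probability of `P` under the random `F`-graph `H_F(n,π)`. -/
def hfProb (r n : ℕ) (F : SimpleGraph (Fin r)) (π : ℝ)
    (P : Finset (FEdge (Fin n)) → Prop) : ℝ :=
  hfExp r n F π fun S => if P S then 1 else 0

/-! ### Maps, isomorphisms and copies of `F`-graphs -/

/-- Image of an `F`-edge under a vertex map. -/
def FEdge.map {V W : Type*} [DecidableEq W] (ψ : V → W) (h : FEdge V) : FEdge W :=
  (h.1.image ψ, h.2.image (Sym2.map ψ))

/-- Image of an `F`-graph under a vertex map. -/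
def FGraph.map {V W : Type*} [DecidableEq V] [DecidableEq W] (ψ : V → W)
    (H : FGraph V) : FGraph W :=
  (H.1.image ψ, H.2.image (FEdge.map ψ))

/-- `H` is isomorphic to `K` via a vertex bijection mapping `F`-edges to `F`-edges. -/
def FGraph.IsoTo {V W : Type*} [DecidableEq V] [DecidableEq W] (H : FGraph V)
    (K : FGraph W) : Prop :=
  ∃ ψ : V → W, Set.InjOn ψ ↑H.1 ∧ FGraph.map ψ H = K

/-- The number of copies of the `F`-graph `H` among a set `S` of `F`-edges on `Fin n`. -/
def copyCount {V : Type*} [DecidableEq V] (H : FGraph V) {n : ℕ}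
    (S : Finset (FEdge (Fin n))) : ℕ :=
  Nat.card {K : FGraph (Fin n) // K.2 ⊆ S ∧ FGraph.IsoTo H K}

/-- Union of two `F`-graphs. -/
def FGraph.union {V : Type*} [DecidableEq V] (H K : FGraph V) : FGraph V :=
  (H.1 ∪ K.1, H.2 ∪ K.2)

/-! ### d-graphs and the random d-graph `G*(n,p)` -/

/-- A d-graph: vertices, usual edges, and dummy edges (identified with sparse clean
`F`-cycles). -/
abbrev DGraph (V : Type*) := Finset V × Finset (Sym2 V) × Finset (FGraph V)

/-- All potential usual edges on `Fin n`. -/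
def allUsual (n : ℕ) : Finset (Sym2 (Fin n)) := Finset.univ.filter fun e => ¬e.IsDiag

/-- All potential dummy edges on `Fin n`: the sparse clean `F`-cycles. -/
def allDummies (r n : ℕ) (F : SimpleGraph (Fin r)) : Finset (FGraph (Fin n)) :=
  Finset.univ.filter fun C => IsSparse F C

/-- Expectation of `X` under the random d-graph `G*(n,p)`: each usual edge and each dummy
edge is included independently with probability `p`. -/
def dgExp (r n : ℕ) (F : SimpleGraph (Fin r)) (p : ℝ)
    (X : Finset (Sym2 (Fin n)) → Finset (FGraph (Fin n)) → ℝ) : ℝ :=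
  ∑ U ∈ (allUsual n).powerset, ∑ D ∈ (allDummies r n F).powerset,
    p ^ (U.card + D.card) *
      (1 - p) ^ (((allUsual n).card - U.card) + ((allDummies r n F).card - D.card)) * X U D

/-- Probability of `P` under the random d-graph `G*(n,p)`. -/
def dgProb (r n : ℕ) (F : SimpleGraph (Fin r)) (p : ℝ)
    (P : Finset (Sym2 (Fin n)) → Finset (FGraph (Fin n)) → Prop) : ℝ :=
  dgExp r n F p fun U D => if P U D then 1 else 0

/-- Image of a d-graph under a vertex map. -/
def DGraph.map {V W : Type*} [DecidableEq V] [DecidableEq W] (ψ : V → W)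
    (K : DGraph V) : DGraph W :=
  (K.1.image ψ, K.2.1.image (Sym2.map ψ), K.2.2.image (FGraph.map ψ))

/-- `K` is isomorphic to `L` as a d-graph. -/
def DGraph.IsoTo {V W : Type*} [DecidableEq V] [DecidableEq W] (K : DGraph V)
    (L : DGraph W) : Prop :=
  ∃ ψ : V → W, Set.InjOn ψ ↑K.1 ∧ DGraph.map ψ K = L

/-- The number of copies of the d-graph `K` inside the d-graph on `Fin n` with usual edges
`U` and dummy edges `D`. -/
def dCopyCount {V : Type*} [DecidableEq V] (K : DGraph V) {n : ℕ}
    (U : Finset (Sym2 (Fin n))) (D : Finset (FGraph (Fin n))) : ℕ :=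
  Nat.card {L : DGraph (Fin n) // L.2.1 ⊆ U ∧ L.2.2 ⊆ D ∧ DGraph.IsoTo K L}

/-- Union of two d-graphs. -/
def DGraph.union {V : Type*} [DecidableEq V] (K L : DGraph V) : DGraph V :=
  (K.1 ∪ L.1, K.2.1 ∪ L.2.1, K.2.2 ∪ L.2.2)

/-- `G` is the clean d-cycle corresponding to the clean `F`-cycle `C`: the shadow graph of
`C` if `C` is dense, together with the dummy edge `C` if `C` is sparse. -/
def IsCleanDCycleOf {r : ℕ} {V : Type*} [DecidableEq V] (F : SimpleGraph (Fin r))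
    (G : DGraph V) (C : FGraph V) : Prop :=
  (IsCleanCycle F C ∧ ¬IsSparse F C ∧ G = (C.1, shadowEdges C, (∅ : Finset (FGraph V)))) ∨
  (IsSparse F C ∧ G = (C.1, shadowEdges C, ({C} : Finset (FGraph V))))


/-! ### Auxiliary lemmas for Statement 18 -/

private lemma fedge_support {r : ℕ} {V : Type*} {h : FEdge V} {F : SimpleGraph (Fin r)}
    (hc : FEdge.IsCopyOf h F) : ∀ e ∈ h.2, ∀ x ∈ e, x ∈ h.1 := by
  obtain ⟨φ, hφ, h1, h2⟩ := hc
  intro e he x hx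
  have he' : e ∈ (↑h.2 : Set (Sym2 V)) := he
  rw [h2] at he'
  obtain ⟨e₀, he₀, rfl⟩ := he'
  rw [Sym2.mem_map] at hx
  obtain ⟨y, hy, rfl⟩ := hx
  have : φ y ∈ (↑h.1 : Set V) := by rw [h1]; exact ⟨y, rfl⟩
  exact this

private lemma fedge_card {r : ℕ} {V : Type*} {h : FEdge V} {F : SimpleGraph (Fin r)}
    (hc : FEdge.IsCopyOf h F) : h.1.card = r := by
  obtain ⟨φ, hφ, h1, -⟩ := hc
  have : (↑h.1 : Set V).ncard = r := by
    rw [h1, ← Set.image_univ, Set.ncard_image_of_injective _ hφ, Set.ncard_univ,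
      Nat.card_eq_fintype_card, Fintype.card_fin]
  rwa [Set.ncard_coe_finset] at this

private lemma sym2_map_injOn {V W : Type*} {ρ : V → W} {S : Set V} (hinj : Set.InjOn ρ S)
    {e e' : Sym2 V} (he : ∀ x ∈ e, x ∈ S) (he' : ∀ x ∈ e', x ∈ S)
    (heq : Sym2.map ρ e = Sym2.map ρ e') : e = e' := by
  induction e using Sym2.ind with | _ a b =>
  induction e' using Sym2.ind with | _ c d =>
  simp only [Sym2.map_pair_eq, Sym2.eq_iff] at heq ⊢
  have ha := he a (by simp); have hb := he b (by simp)
  have hc := he' c (by simp); have hd := he' d (by simp)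
  rcases heq with ⟨h1, h2⟩ | ⟨h1, h2⟩
  · exact Or.inl ⟨hinj ha hc h1, hinj hb hd h2⟩
  · exact Or.inr ⟨hinj ha hd h1, hinj hb hc h2⟩

private lemma shadowEdges_map {V W : Type*} [DecidableEq V] [DecidableEq W] (ρ : V → W)
    (H : FGraph V) : shadowEdges (FGraph.map ρ H) = (shadowEdges H).image (Sym2.map ρ) := by
  unfold shadowEdges FGraph.map FEdge.map
  ext e
  simp only [Finset.mem_sup, Finset.mem_image]
  constructor
  · rintro ⟨g, hg, hge⟩
    obtain ⟨g₀, hg₀, rfl⟩ := hg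
    obtain ⟨e₀, he₀, rfl⟩ := by simpa using hge
    exact ⟨e₀, ⟨g₀, hg₀, he₀⟩, rfl⟩
  · rintro ⟨e₀, ⟨g₀, hg₀, he₀⟩, rfl⟩
    exact ⟨FEdge.map ρ g₀, ⟨g₀, hg₀, rfl⟩, by
      simp only [FEdge.map, Finset.mem_image]; exact ⟨e₀, he₀, rfl⟩⟩

private lemma shadowEdges_union_left {V : Type*} [DecidableEq V] (H K : FGraph V) :
    shadowEdges H ⊆ shadowEdges (FGraph.union H K) := by
  intro e he
  unfold shadowEdges FGraph.union at *
  obtain ⟨g, hg, hge⟩ := Finset.mem_sup.1 he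
  exact Finset.mem_sup.2 ⟨g, Finset.mem_union_left _ hg, hge⟩

private lemma shadowEdges_union_right {V : Type*} [DecidableEq V] (H K : FGraph V) :
    shadowEdges K ⊆ shadowEdges (FGraph.union H K) := by
  intro e he
  unfold shadowEdges FGraph.union at *
  obtain ⟨g, hg, hge⟩ := Finset.mem_sup.1 he
  exact Finset.mem_sup.2 ⟨g, Finset.mem_union_right _ hg, hge⟩

private lemma reach_mono {V : Type*} {G₁ G₂ : SimpleGraph V} {s t : Set V} (hst : s ⊆ t)
    (hG : G₁ ≤ G₂) {a b : V} (ha : a ∈ s) (hb : b ∈ s)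
    (hr : (G₁.induce s).Reachable ⟨a, ha⟩ ⟨b, hb⟩) :
    (G₂.induce t).Reachable ⟨a, hst ha⟩ ⟨b, hst hb⟩ := by
  exact SimpleGraph.Reachable.map
    ⟨Set.inclusion hst, fun {x y} hadj => by
      simp only [SimpleGraph.comap_adj, Function.Embedding.coe_subtype] at hadj ⊢
      exact hG hadj⟩ hr

private lemma compCount_eq_one {V : Type*} [DecidableEq V] (H : FGraph V)
    (hc : FGraphConnected H) : compCount H = 1 := by
  unfold compCount
  obtain ⟨x⟩ := hc.nonempty
  haveI : Subsingleton ((shadow H).induce (↑H.1 : Set V)).ConnectedComponent :=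
    ⟨SimpleGraph.ConnectedComponent.ind₂ fun u w =>
      SimpleGraph.ConnectedComponent.eq.2 (hc.preconnected u w)⟩
  rw [Nat.card_eq_one_iff_unique]
  exact ⟨this, ⟨SimpleGraph.connectedComponentMk _ x⟩⟩

private lemma union_connected {V : Type*} [DecidableEq V] (H K : FGraph V)
    (hH : FGraphConnected H) (hK : FGraphConnected K) (w : V) (hw1 : w ∈ H.1)
    (hw2 : w ∈ K.1) : FGraphConnected (FGraph.union H K) := by
  have hsH : (↑H.1 : Set V) ⊆ ↑(FGraph.union H K).1 := by
    intro x hx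
    simp only [FGraph.union, Finset.coe_union, Set.mem_union]
    exact Or.inl hx
  have hsK : (↑K.1 : Set V) ⊆ ↑(FGraph.union H K).1 := by
    intro x hx
    simp only [FGraph.union, Finset.coe_union, Set.mem_union]
    exact Or.inr hx
  have hGH : shadow H ≤ shadow (FGraph.union H K) :=
    SimpleGraph.fromEdgeSet_mono (by exact_mod_cast shadowEdges_union_left H K)
  have hGK : shadow K ≤ shadow (FGraph.union H K) :=
    SimpleGraph.fromEdgeSet_mono (by exact_mod_cast shadowEdges_union_right H K)
  rw [FGraphConnected, SimpleGraph.connected_iff]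
  refine ⟨?_, ⟨⟨w, hsH hw1⟩⟩⟩
  have keyH : ∀ z (hz : z ∈ (↑H.1 : Set V)),
      ((shadow (FGraph.union H K)).induce ↑(FGraph.union H K).1).Reachable
        ⟨z, hsH hz⟩ ⟨w, hsH hw1⟩ := fun z hz =>
    reach_mono hsH hGH hz hw1 (hH.preconnected ⟨z, hz⟩ ⟨w, hw1⟩)
  have keyK : ∀ z (hz : z ∈ (↑K.1 : Set V)),
      ((shadow (FGraph.union H K)).induce ↑(FGraph.union H K).1).Reachable
        ⟨z, hsK hz⟩ ⟨w, hsK hw2⟩ := fun z hz =>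
    reach_mono hsK hGK hz hw2 (hK.preconnected ⟨z, hz⟩ ⟨w, hw2⟩)
  rintro ⟨x, hx⟩ ⟨y, hy⟩
  have hx' : x ∈ (↑H.1 : Set V) ∨ x ∈ (↑K.1 : Set V) := by
    simpa [FGraph.union] using hx
  have hy' : y ∈ (↑H.1 : Set V) ∨ y ∈ (↑K.1 : Set V) := by
    simpa [FGraph.union] using hy
  have hxw : ((shadow (FGraph.union H K)).induce ↑(FGraph.union H K).1).Reachable
      ⟨x, hx⟩ ⟨w, hsH hw1⟩ := by
    rcases hx' with hx' | hx'
    · exact keyH x hx'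
    · exact keyK x hx'
  have hyw : ((shadow (FGraph.union H K)).induce ↑(FGraph.union H K).1).Reachable
      ⟨y, hy⟩ ⟨w, hsH hw1⟩ := by
    rcases hy' with hy' | hy'
    · exact keyH y hy'
    · exact keyK y hy'
  exact hxw.trans hyw.symm

private lemma map_connected {V : Type*} [DecidableEq V] (H : FGraph V) (ρ : V → V)
    (hc : FGraphConnected H) (hinj : Set.InjOn ρ ↑H.1)
    (hsupp : ∀ e ∈ shadowEdges H, ∀ x ∈ e, x ∈ H.1) :
    FGraphConnected (FGraph.map ρ H) := by
  have hmem : ∀ x ∈ (↑H.1 : Set V), ρ x ∈ (↑(FGraph.map ρ H).1 : Set V) := by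
    intro x hx
    simp only [FGraph.map, Finset.coe_image, Set.mem_image, Finset.mem_coe]
    exact ⟨x, hx, rfl⟩
  let f : (shadow H).induce ↑H.1 →g (shadow (FGraph.map ρ H)).induce ↑(FGraph.map ρ H).1 := by
    refine ⟨fun x => ⟨ρ x.1, hmem x.1 x.2⟩, ?_⟩
    rintro ⟨x, hx⟩ ⟨y, hy⟩ hadj
    simp only [SimpleGraph.comap_adj, Function.Embedding.coe_subtype, shadow,
      SimpleGraph.fromEdgeSet_adj, Finset.mem_coe] at hadj ⊢
    obtain ⟨he, hne⟩ := hadj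
    refine ⟨?_, fun hcon => hne (hinj hx hy hcon)⟩
    rw [shadowEdges_map]
    rw [Finset.mem_image]
    exact ⟨s(x, y), he, rfl⟩
  have hsurj : Function.Surjective f := by
    rintro ⟨y, hy⟩
    simp only [FGraph.map, Finset.coe_image, Set.mem_image, Finset.mem_coe] at hy
    obtain ⟨x, hx, rfl⟩ := hy
    exact ⟨⟨x, hx⟩, Subtype.ext rfl⟩
  exact SimpleGraph.Connected.map f hsurj hc

/-- Let `H₁, H₂` be connected `F`-graphs, `h` an `F`-edge of both, and `v`
a vertex of `h` such that the remaining `r-1` vertices of `h` are incident to no other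
common `F`-edge. Replacing those `r-1` vertices in `H₂` by fresh vertices leaves the
nullity of the union unchanged. -/
theorem nullity_split_edge {r : ℕ} (F : SimpleGraph (Fin r)) {V : Type*} [DecidableEq V]
    (H₁ H₂ : FGraph V) (hw₁ : FGraph.Wf H₁ F) (hw₂ : FGraph.Wf H₂ F)
    (hc₁ : FGraphConnected H₁) (hc₂ : FGraphConnected H₂)
    (h : FEdge V) (hh : h ∈ H₁.2 ∩ H₂.2) (v : V) (hv : v ∈ h.1)
    (hother : ∀ u ∈ h.1, u ≠ v → ∀ h' ∈ H₁.2 ∩ H₂.2, h' ≠ h → u ∉ h'.1)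
    (ρ : V → V) (hfix : ∀ x, x ∉ h.1 \ {v} → ρ x = x)
    (hinj : Set.InjOn ρ (↑h.1 : Set V))
    (hnew : ∀ x ∈ h.1, x ≠ v → ρ x ∉ H₁.1 ∪ H₂.1) :
    nullity r (FGraph.union H₁ (FGraph.map ρ H₂)) = nullity r (FGraph.union H₁ H₂) := by
  classical
  have hh1 : h ∈ H₁.2 := (Finset.mem_inter.1 hh).1
  have hh2 : h ∈ H₂.2 := (Finset.mem_inter.1 hh).2
  have hcopy := (hw₁ h hh1).1
  have hsub1 : h.1 ⊆ H₁.1 := (hw₁ h hh1).2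
  have hsub2 : h.1 ⊆ H₂.1 := (hw₂ h hh2).2
  have hr : h.1.card = r := fedge_card hcopy
  have hr1 : 1 ≤ r := by rw [← hr]; exact Finset.card_pos.2 ⟨v, hv⟩
  by_cases hr2 : r = 1
  · -- trivial case: `h` has a single vertex, `ρ` is the identity
    have hAe : h.1 \ {v} = ∅ := by
      rw [← Finset.erase_eq, ← Finset.card_eq_zero, Finset.card_erase_of_mem hv, hr, hr2]
    have hρ : ρ = id := funext fun x => hfix x (by simp [hAe])
    have hmapid : FGraph.map (id : V → V) H₂ = H₂ := by
      unfold FGraph.map FEdge.map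
      simp [Sym2.map_id]
    rw [hρ, hmapid]
  -- main case: 2 ≤ r
  have hr2' : 2 ≤ r := by omega
  have hρv : ρ v = v := hfix v (by simp)
  have memA : ∀ {x : V}, x ∈ h.1 \ {v} ↔ x ∈ h.1 ∧ x ≠ v := by
    intro x; rw [Finset.mem_sdiff, Finset.mem_singleton]
  have hAcard : (h.1 \ {v}).card = r - 1 := by
    rw [← Finset.erase_eq, Finset.card_erase_of_mem hv, hr]
  have hAsub : h.1 \ {v} ⊆ H₁.1 ∩ H₂.1 := fun x hx =>
    Finset.mem_inter.2 ⟨hsub1 (memA.1 hx).1, hsub2 (memA.1 hx).1⟩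
  -- injectivity of ρ on the vertex set of H₂
  have hinj2 : Set.InjOn ρ (↑H₂.1 : Set V) := by
    intro x hx y hy hxy
    by_cases hxA : x ∈ h.1 \ {v} <;> by_cases hyA : y ∈ h.1 \ {v}
    · exact hinj (Finset.mem_coe.2 (memA.1 hxA).1) (Finset.mem_coe.2 (memA.1 hyA).1) hxy
    · exfalso
      have hn := hnew x (memA.1 hxA).1 (memA.1 hxA).2
      rw [hxy, hfix y hyA] at hn
      exact hn (Finset.mem_union_right _ hy)
    · exfalso
      have hn := hnew y (memA.1 hyA).1 (memA.1 hyA).2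
      rw [← hxy, hfix x hxA] at hn
      exact hn (Finset.mem_union_right _ hx)
    · rw [hfix x hxA, hfix y hyA] at hxy; exact hxy
  -- vertex intersection
  have hVint : H₁.1 ∩ H₂.1.image ρ = (H₁.1 ∩ H₂.1) \ (h.1 \ {v}) := by
    ext x
    simp only [Finset.mem_inter, Finset.mem_image, Finset.mem_sdiff]
    constructor
    · rintro ⟨hx1, u, hu, rfl⟩
      by_cases huA : u ∈ h.1 \ {v}
      · exact absurd (Finset.mem_union_left _ hx1)
          (hnew u (memA.1 huA).1 (memA.1 huA).2)
      · have heq : ρ u = u := hfix u huA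
        rw [heq] at hx1 ⊢
        exact ⟨⟨hx1, hu⟩, fun hA' => huA (Finset.mem_sdiff.2 hA')⟩
    · rintro ⟨⟨hx1, hx2⟩, hxA⟩
      exact ⟨hx1, x, hx2, hfix x (fun hx => hxA (Finset.mem_sdiff.1 hx))⟩
  -- supports of F-edges and shadow edges of H₂
  have hedge_supp : ∀ g ∈ H₂.2, ∀ e ∈ g.2, ∀ x ∈ e, x ∈ H₂.1 := fun g hg e he x hx =>
    (hw₂ g hg).2 (fedge_support (hw₂ g hg).1 e he x hx)
  -- F-edges disjoint from the replaced vertices are fixed by ρ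
  have hfixedge : ∀ g : FEdge V, (∀ x ∈ g.1, x ∉ h.1 \ {v}) → FEdge.IsCopyOf g F →
      FEdge.map ρ g = g := by
    intro g hdis hgcopy
    have hvfix : ∀ x ∈ g.1, ρ x = x := fun x hx => hfix x (hdis x hx)
    have h1 : g.1.image ρ = g.1 := by
      rw [Finset.image_congr (fun x hx => hvfix x hx), Finset.image_id']
    have h2 : g.2.image (Sym2.map ρ) = g.2 := by
      have hids : ∀ e ∈ g.2, Sym2.map ρ e = e := by
        intro e he
        induction e using Sym2.ind with | _ a b =>
        have ha := fedge_support hgcopy _ he a (by simp)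
        have hb := fedge_support hgcopy _ he b (by simp)
        rw [Sym2.map_pair_eq, hvfix a ha, hvfix b hb]
      calc g.2.image (Sym2.map ρ) = g.2.image (fun e => e) :=
            Finset.image_congr (fun e he => hids e he)
        _ = g.2 := Finset.image_id'
    exact Prod.ext h1 h2
  -- A is nonempty
  have hAne : (h.1 \ {v}).Nonempty := by
    rw [← Finset.card_pos, hAcard]; omega
  -- edge intersection
  have hEint : H₁.2 ∩ H₂.2.image (FEdge.map ρ) = (H₁.2 ∩ H₂.2).erase h := by
    ext g
    simp only [Finset.mem_inter, Finset.mem_image, Finset.mem_erase]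
    constructor
    · rintro ⟨hg1, g₀, hg₀, rfl⟩
      by_cases hmeet : ∃ u ∈ g₀.1, u ∈ h.1 \ {v}
      · exfalso
        obtain ⟨u, hu, huA⟩ := hmeet
        have hnew' := hnew u (memA.1 huA).1 (memA.1 huA).2
        have hmem : ρ u ∈ (FEdge.map ρ g₀).1 := Finset.mem_image_of_mem ρ hu
        exact hnew' (Finset.mem_union_left _ ((hw₁ _ hg1).2 hmem))
      · push_neg at hmeet
        have hfixg : FEdge.map ρ g₀ = g₀ := hfixedge g₀ hmeet (hw₂ g₀ hg₀).1
        rw [hfixg] at hg1 ⊢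
        refine ⟨fun hgh => ?_, hg1, hg₀⟩
        obtain ⟨u, huA⟩ := hAne
        exact hmeet u (hgh ▸ (memA.1 huA).1) huA
    · rintro ⟨hgh, hg1, hg2⟩
      have hdis : ∀ u ∈ g.1, u ∉ h.1 \ {v} := by
        intro u hu huA
        exact hother u (memA.1 huA).1 (memA.1 huA).2 g (Finset.mem_inter.2 ⟨hg1, hg2⟩) hgh hu
      exact ⟨hg1, g, hg2, hfixedge g hdis (hw₁ g hg1).1⟩
  -- injectivity of FEdge.map ρ on the F-edges of H₂
  have hinjE : Set.InjOn (FEdge.map ρ) ↑H₂.2 := by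
    intro g₁ hg₁ g₂ hg₂ heq
    have hg₁' : g₁ ∈ H₂.2 := hg₁
    have hg₂' : g₂ ∈ H₂.2 := hg₂
    have e1 : g₁.1.image ρ = g₂.1.image ρ := congrArg Prod.fst heq
    have e2 : g₁.2.image (Sym2.map ρ) = g₂.2.image (Sym2.map ρ) := congrArg Prod.snd heq
    have hv12 : g₁.1 = g₂.1 := by
      ext u
      constructor
      · intro hu
        have : ρ u ∈ g₂.1.image ρ := e1 ▸ Finset.mem_image_of_mem ρ hu
        obtain ⟨w, hw, hwu⟩ := Finset.mem_image.1 this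
        have := hinj2 ((hw₂ g₂ hg₂').2 hw) ((hw₂ g₁ hg₁').2 hu) hwu
        rwa [← this]
      · intro hu
        have : ρ u ∈ g₁.1.image ρ := e1 ▸ Finset.mem_image_of_mem ρ hu
        obtain ⟨w, hw, hwu⟩ := Finset.mem_image.1 this
        have := hinj2 ((hw₂ g₁ hg₁').2 hw) ((hw₂ g₂ hg₂').2 hu) hwu
        rwa [← this]
    have he12 : g₁.2 = g₂.2 := by
      ext e
      constructor
      · intro he
        have : Sym2.map ρ e ∈ g₂.2.image (Sym2.map ρ) :=
          e2 ▸ Finset.mem_image_of_mem _ he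
        obtain ⟨e', he', hee⟩ := Finset.mem_image.1 this
        have := sym2_map_injOn hinj2 (fun x hx => hedge_supp g₂ hg₂' e' he' x hx)
          (fun x hx => hedge_supp g₁ hg₁' e he x hx) hee
        rwa [← this]
      · intro he
        have : Sym2.map ρ e ∈ g₁.2.image (Sym2.map ρ) :=
          e2 ▸ Finset.mem_image_of_mem _ he
        obtain ⟨e', he', hee⟩ := Finset.mem_image.1 this
        have := sym2_map_injOn hinj2 (fun x hx => hedge_supp g₁ hg₁' e' he' x hx)
          (fun x hx => hedge_supp g₂ hg₂' e he x hx) hee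
        rwa [← this]
    exact Prod.ext hv12 he12
  have hEcard : (H₂.2.image (FEdge.map ρ)).card = H₂.2.card :=
    Finset.card_image_of_injOn hinjE
  have hVcard : (H₂.1.image ρ).card = H₂.1.card := Finset.card_image_of_injOn hinj2
  -- edge count bookkeeping
  have e1 := Finset.card_union_add_card_inter H₁.2 (H₂.2.image (FEdge.map ρ))
  rw [hEint, hEcard, Finset.card_erase_of_mem hh] at e1
  have e2 := Finset.card_union_add_card_inter H₁.2 H₂.2
  have hIpos : 1 ≤ (H₁.2 ∩ H₂.2).card := Finset.card_pos.2 ⟨h, hh⟩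
  have hEfinal : (H₁.2 ∪ H₂.2.image (FEdge.map ρ)).card = (H₁.2 ∪ H₂.2).card + 1 := by
    omega
  -- vertex count bookkeeping
  have v1 := Finset.card_union_add_card_inter H₁.1 (H₂.1.image ρ)
  rw [hVint, hVcard] at v1
  have v2 := Finset.card_union_add_card_inter H₁.1 H₂.1
  have hAle := Finset.card_le_card hAsub
  have hsd := Finset.card_sdiff_of_subset hAsub
  rw [hAcard] at hsd hAle
  have hVfinal : (H₁.1 ∪ H₂.1.image ρ).card = (H₁.1 ∪ H₂.1).card + (r - 1) := by
    omega
  -- both unions are connected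
  have hc₂' : FGraphConnected (FGraph.map ρ H₂) := by
    refine map_connected H₂ ρ hc₂ hinj2 ?_
    intro e he x hx
    obtain ⟨g, hg, hge⟩ := Finset.mem_sup.1 he
    exact hedge_supp g hg e hge x hx
  have hcU' : compCount (FGraph.union H₁ (FGraph.map ρ H₂)) = 1 :=
    compCount_eq_one _ (union_connected _ _ hc₁ hc₂' v (hsub1 hv)
      (Finset.mem_image.2 ⟨v, hsub2 hv, hρv⟩))
  have hcU : compCount (FGraph.union H₁ H₂) = 1 :=
    compCount_eq_one _ (union_connected _ _ hc₁ hc₂ v (hsub1 hv) (hsub2 hv))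
  -- final arithmetic
  simp only [nullity]
  rw [hcU, hcU']
  have hU2 : (FGraph.union H₁ (FGraph.map ρ H₂)).2 = H₁.2 ∪ H₂.2.image (FEdge.map ρ) := rfl
  have hU1 : (FGraph.union H₁ (FGraph.map ρ H₂)).1 = H₁.1 ∪ H₂.1.image ρ := rfl
  have hW2 : (FGraph.union H₁ H₂).2 = H₁.2 ∪ H₂.2 := rfl
  have hW1 : (FGraph.union H₁ H₂).1 = H₁.1 ∪ H₂.1 := rfl
  rw [hU2, hU1, hW2, hW1, hEfinal, hVfinal]
  have hcast : ((r - 1 : ℕ) : ℤ) = (r : ℤ) - 1 := by omega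
  push_cast [hcast]
  ring

end
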